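/- arXiv:2010.08368 — 5 statements merged into one kernel-verified Lean document; each statement's English description precedes it below -/
import Mathlib

section
/- Let k ≥ 2 be an integer, let G be a total k-uniform graph, and let v₁v₂ be an edge of G. Then the subgraph of G induced by V(G) \ (N[v₁] ∪ N[v₂]) has no isolated vertices. -/
/-!
If `x` were isolated in `G - (N[v₁] ∪ N[v₂])`, then `N(x) ⊆ N[v₁] ∪ N[v₂] ⊆ N(v₁) ∪ N(v₂)`,
since `v₁v₂` is an edge. The sequence `(x, v₁, v₂)` is legal and extends greedily to a total
dominating sequence `(x, v₁, v₂, …)`; dropping `x` still leaves a total dominating sequence, so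
`G` has total dominating sequences of two different lengths, contradicting uniformity.
-/

open SimpleGraph

/-- `A ⊆ V(G)` is a total dominating set of `G`: every vertex has a neighbor in `A`. -/
def TotalDomSet {V : Type*} (G : SimpleGraph V) (A : Set V) : Prop :=
  ∀ v : V, ∃ a ∈ A, G.Adj v a

/-- `s` is a legal (open neighborhood) sequence of `G`: the vertices are distinct and every
vertex after the first has a neighbor adjacent to no vertex preceding it in the sequence. -/
def LegalSeq {V : Type*} (G : SimpleGraph V) (s : List V) : Prop :=
  s.Nodup ∧ ∀ (i : ℕ) (h : i < s.length), 0 < i →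
    ∃ w : V, G.Adj (s.get ⟨i, h⟩) w ∧ ∀ u ∈ s.take i, ¬ G.Adj u w

/-- `s` is a total dominating sequence of `G`: a legal sequence whose underlying set is a
total dominating set. -/
def TotalDomSeq {V : Type*} (G : SimpleGraph V) (s : List V) : Prop :=
  LegalSeq G s ∧ TotalDomSet G {v | v ∈ s}

/-- The total domination number `γ_t(G)`: the minimum size of a total dominating set. -/
noncomputable def totalDomNum {V : Type*} (G : SimpleGraph V) : ℕ :=
  sInf {n | ∃ A : Set V, TotalDomSet G A ∧ A.ncard = n}

/-- The Grundy total domination number `γ_gr^t(G)`: the maximum length of a total dominating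
sequence. -/
noncomputable def grundyTotalDomNum {V : Type*} (G : SimpleGraph V) : ℕ :=
  sSup {n | ∃ s : List V, TotalDomSeq G s ∧ s.length = n}

/-- `G` is total `k`-uniform if `γ_t(G) = γ_gr^t(G) = k`. -/
def TotalKUniform {V : Type*} (G : SimpleGraph V) (k : ℕ) : Prop :=
  totalDomNum G = k ∧ grundyTotalDomNum G = k

/-- `G` has no isolated vertices. -/
def NoIsolatedVerts {V : Type*} (G : SimpleGraph V) : Prop :=
  ∀ v : V, ∃ w : V, G.Adj v w

/-- The closed neighborhood `N[v] = N(v) ∪ {v}`. -/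
def closedNbhd {V : Type*} (G : SimpleGraph V) (v : V) : Set V :=
  insert v (G.neighborSet v)

/-- `G` is false twin-free: no two distinct vertices have the same (open) neighborhood. -/
def FalseTwinFree {V : Type*} (G : SimpleGraph V) : Prop :=
  ∀ u v : V, u ≠ v → G.neighborSet u ≠ G.neighborSet v

section

variable {V : Type*} {G : SimpleGraph V}

theorem LegalSeq.singleton (x : V) : LegalSeq G [x] :=
  ⟨List.nodup_singleton x, fun i h hi => by simp at h; omega⟩

theorem LegalSeq.append_singleton {s : List V} (hs : LegalSeq G s) {v : V} (hv : v ∉ s)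
    {w : V} (hw : G.Adj v w) (hpriv : ∀ u ∈ s, ¬ G.Adj u w) :
    LegalSeq G (s ++ [v]) := by
  refine ⟨List.nodup_append.mpr ⟨hs.1, List.nodup_singleton v, ?_⟩, fun i h hi => ?_⟩
  · simp only [List.mem_singleton]
    rintro a ha _ rfl rfl
    exact hv ha
  obtain h' | rfl : i < s.length ∨ i = s.length := by simp at h; omega
  · obtain ⟨w', hw', hpriv'⟩ := hs.2 i h' hi
    refine ⟨w', by simpa [List.getElem_append_left h'] using hw', fun u hu => hpriv' u ?_⟩
    rwa [List.take_append_of_le_length h'.le] at hu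
  · exact ⟨w, by simpa using hw, fun u hu => hpriv u (by rwa [List.take_left] at hu)⟩

theorem LegalSeq.of_cons {x : V} {s : List V} (h : LegalSeq G (x :: s)) : LegalSeq G s := by
  refine ⟨(List.nodup_cons.mp h.1).2, fun i hi _ => ?_⟩
  obtain ⟨w, hw, hpriv⟩ := h.2 (i + 1) (by simpa using hi) i.succ_pos
  exact ⟨w, by simpa using hw, fun u hu => hpriv u (by simp [hu])⟩

theorem totalDomSet_of_forall_adj_dominated (hiso : NoIsolatedVerts G) {A : Set V}
    (hA : ∀ v ∉ A, ∀ w, G.Adj v w → ∃ u ∈ A, G.Adj u w) : TotalDomSet G A := by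
  intro v
  obtain ⟨z, hz⟩ := hiso v
  by_cases hzA : z ∈ A
  · exact ⟨z, hzA, hz⟩
  · obtain ⟨u, hu, huv⟩ := hA z hzA v hz.symm
    exact ⟨u, hu, huv.symm⟩

theorem LegalSeq.exists_totalDomSeq_extension [Finite V] (hiso : NoIsolatedVerts G)
    {s : List V} (hs : LegalSeq G s) : ∃ t, s <+: t ∧ TotalDomSeq G t := by
  by_cases hext : ∃ v ∉ s, ∃ w, G.Adj v w ∧ ∀ u ∈ s, ¬ G.Adj u w
  · obtain ⟨v, hv, w, hw, hpriv⟩ := hext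
    obtain ⟨t, hst, ht⟩ := (hs.append_singleton hv hw hpriv).exists_totalDomSeq_extension hiso
    exact ⟨t, (List.prefix_append s [v]).trans hst, ht⟩
  · push Not at hext
    exact ⟨s, List.prefix_refl s, hs, totalDomSet_of_forall_adj_dominated hiso hext⟩
termination_by Nat.card V - s.length
decreasing_by
  have := Fintype.ofFinite V
  have := (hs.append_singleton hv hw hpriv).1.length_le_card
  simp only [List.length_append, List.length_singleton, Nat.card_eq_fintype_card] at this ⊢
  omega

theorem TotalDomSeq.of_cons {x : V} {s : List V} (h : TotalDomSeq G (x :: s))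
    (hx : ∀ w, G.Adj x w → ∃ u ∈ s, G.Adj u w) : TotalDomSeq G s := by
  refine ⟨h.1.of_cons, fun v => ?_⟩
  obtain ⟨a, ha, hva⟩ := h.2 v
  rcases List.mem_cons.mp ha with rfl | has
  · obtain ⟨u, hu, huv⟩ := hx v hva.symm
    exact ⟨u, hu, huv.symm⟩
  · exact ⟨a, has, hva⟩

theorem TotalDomSeq.totalDomNum_le_length {s : List V} (hs : TotalDomSeq G s) :
    totalDomNum G ≤ s.length := by
  classical
  refine Nat.sInf_le ⟨{v | v ∈ s}, hs.2, ?_⟩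
  rw [show {v | v ∈ s} = (s.toFinset : Set V) by ext; simp, Set.ncard_coe_finset,
    List.toFinset_card_of_nodup hs.1.1]

theorem TotalDomSeq.length_le_grundyTotalDomNum [Finite V] {s : List V}
    (hs : TotalDomSeq G s) : s.length ≤ grundyTotalDomNum G := by
  have := Fintype.ofFinite V
  refine le_csSup ⟨Fintype.card V, ?_⟩ ⟨s, hs, rfl⟩
  rintro n ⟨t, ht, rfl⟩
  exact ht.1.1.length_le_card

theorem TotalKUniform.not_totalDomSeq_of_cons [Finite V] {k : ℕ} (huni : TotalKUniform G k)
    {x : V} {s : List V} (h : TotalDomSeq G (x :: s)) : ¬ TotalDomSeq G s := fun hs => by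
  have hlong := h.length_le_grundyTotalDomNum
  have hshort := hs.totalDomNum_le_length
  rw [huni.1] at hshort
  rw [huni.2, List.length_cons] at hlong
  omega

end

theorem stmt_0_general {V : Type*} [Finite V] (G : SimpleGraph V) (k : ℕ)
    (hiso : NoIsolatedVerts G) (huni : TotalKUniform G k)
    (v₁ v₂ : V) (hadj : G.Adj v₁ v₂) :
    NoIsolatedVerts (G.induce ((closedNbhd G v₁ ∪ closedNbhd G v₂)ᶜ)) := by
  rintro ⟨x, hxS⟩
  by_contra! hx
  simp only [closedNbhd, Set.compl_union, Set.mem_inter_iff, Set.mem_compl_iff,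
    Set.mem_insert_iff, mem_neighborSet, not_or] at hxS
  obtain ⟨⟨hxv₁, hv₁x⟩, hxv₂, hv₂x⟩ := hxS
  have hNx : ∀ w, G.Adj x w → G.Adj v₁ w ∨ G.Adj v₂ w := by
    intro w hxw
    by_contra! hw
    refine hx ⟨w, ?_⟩ hxw
    simp only [closedNbhd, Set.mem_compl_iff, Set.mem_union, Set.mem_insert_iff,
      mem_neighborSet]
    rintro ((rfl | h) | (rfl | h))
    exacts [hw.2 hadj.symm, hw.1 h, hw.1 hadj, hw.2 h]
  have hleg : LegalSeq G [x, v₁, v₂] :=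
    ((LegalSeq.singleton x).append_singleton (by simpa [eq_comm] using hxv₁) hadj
      (by simpa [adj_comm] using hv₂x)).append_singleton
      (by simpa [not_or] using ⟨Ne.symm hxv₂, hadj.ne'⟩) hadj.symm
      (by simpa [adj_comm] using hv₁x)
  obtain ⟨_, ⟨s, rfl⟩, htd⟩ := hleg.exists_totalDomSeq_extension hiso
  refine huni.not_totalDomSeq_of_cons htd (htd.of_cons fun w hw => ?_)
  rcases hNx w hw with h | h
  exacts [⟨v₁, by simp, h⟩, ⟨v₂, by simp, h⟩]

/-- If `v₁v₂` is an edge of a total `k`-uniform graph `G` (`k ≥ 2`), then the subgraph of `G`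
induced by `V(G) \ (N[v₁] ∪ N[v₂])` has no isolated vertices. -/
theorem stmt_0 {V : Type*} [Finite V] (G : SimpleGraph V) (k : ℕ) (hk : 2 ≤ k)
    (hiso : NoIsolatedVerts G) (huni : TotalKUniform G k)
    (v₁ v₂ : V) (hadj : G.Adj v₁ v₂) :
    NoIsolatedVerts (G.induce ((closedNbhd G v₁ ∪ closedNbhd G v₂)ᶜ)) :=
  stmt_0_general G k hiso huni v₁ v₂ hadj
end

section
/- Let G be a finite simple graph with no isolated vertices and let u and v be false twins in G. Then the graph G − u obtained by deleting u has no isolated vertices, and γ_t(G − u) = γ_t(G) and γ_gr^t(G − u) = γ_gr^t(G). -/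
open SimpleGraph

/-!
Deleting `u` loses nothing: the map `r : V → V ∖ {u}` sending `u` to its twin `v` and fixing every
other vertex satisfies `G = (G - u).comap r`. Along any surjection `φ`, pulling a graph `H` back to
`H.comap φ` preserves both parameters: total dominating sets push forward along `φ` and pull back
along a section of `φ` without growing, and vertices of `H.comap φ` with the same image under `φ` are
false twins, which never occur together in a legal sequence, so `φ` is injective on legal sequences.
-/

open Function

section

variable {V W : Type*}

section Comap

variable {H : SimpleGraph W} {φ : V → W}

lemma NoIsolatedVerts.of_comap (hφ : Surjective φ) (h : NoIsolatedVerts (H.comap φ)) :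
    NoIsolatedVerts H := by
  intro w
  obtain ⟨x, rfl⟩ := hφ w
  obtain ⟨y, hxy⟩ := h x
  exact ⟨φ y, hxy⟩

lemma TotalDomSet.image_of_comap (hφ : Surjective φ) {A : Set V}
    (hA : TotalDomSet (H.comap φ) A) : TotalDomSet H (φ '' A) := by
  intro w
  obtain ⟨x, rfl⟩ := hφ w
  obtain ⟨a, ha, hxa⟩ := hA x
  exact ⟨φ a, Set.mem_image_of_mem φ ha, hxa⟩

lemma TotalDomSet.comap_image {σ : W → V} (hσ : RightInverse σ φ) {B : Set W}
    (hB : TotalDomSet H B) : TotalDomSet (H.comap φ) (σ '' B) := by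
  intro x
  obtain ⟨b, hb, hxb⟩ := hB (φ x)
  refine ⟨σ b, Set.mem_image_of_mem σ hb, ?_⟩
  rwa [comap_adj, hσ b]

end Comap

lemma totalDomNum_le {G : SimpleGraph V} {A : Set V} (hA : TotalDomSet G A) :
    totalDomNum G ≤ A.ncard :=
  Nat.sInf_le ⟨A, hA, rfl⟩

lemma totalDomNum_eq_zero {G : SimpleGraph V} (h : ∀ A, ¬ TotalDomSet G A) :
    totalDomNum G = 0 := by
  simp [totalDomNum, h]

lemma totalDomNum_le_of_forall {G : SimpleGraph V} {H : SimpleGraph W}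
    (hG : ∃ A, TotalDomSet G A)
    (h : ∀ A, TotalDomSet G A → ∃ B, TotalDomSet H B ∧ B.ncard ≤ A.ncard) :
    totalDomNum H ≤ totalDomNum G := by
  obtain ⟨A₀, hA₀⟩ := hG
  obtain ⟨A, hA, hAcard⟩ : totalDomNum G ∈ {n | ∃ A, TotalDomSet G A ∧ A.ncard = n} :=
    Nat.sInf_mem ⟨_, A₀, hA₀, rfl⟩
  obtain ⟨B, hB, hBA⟩ := h A hA
  exact hAcard ▸ (totalDomNum_le hB).trans hBA

theorem totalDomNum_comap_of_surjective [Finite V] {φ : V → W} (hφ : Surjective φ)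
    (H : SimpleGraph W) : totalDomNum (H.comap φ) = totalDomNum H := by
  obtain ⟨σ, hσ⟩ := hφ.hasRightInverse
  by_cases hH : ∃ B, TotalDomSet H B
  · obtain ⟨B, hB⟩ := hH
    apply le_antisymm
    · exact totalDomNum_le_of_forall ⟨B, hB⟩ fun B hB =>
        ⟨σ '' B, hB.comap_image hσ, (Set.ncard_image_of_injective B hσ.injective).le⟩
    · exact totalDomNum_le_of_forall ⟨σ '' B, hB.comap_image hσ⟩ fun A hA =>
        ⟨φ '' A, hA.image_of_comap hφ, Set.ncard_image_le A.toFinite⟩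
  · simp only [not_exists] at hH
    rw [totalDomNum_eq_zero hH, totalDomNum_eq_zero fun A hA => hH _ (hA.image_of_comap hφ)]

lemma LegalSeq.neighborSet_ne_of_lt {G : SimpleGraph V} {s : List V} (hs : LegalSeq G s)
    {i j : ℕ} (hij : i < j) (hj : j < s.length) :
    G.neighborSet s[i] ≠ G.neighborSet s[j] := by
  intro heq
  obtain ⟨w, hjw, hw⟩ := hs.2 j hj (by omega)
  have hiw : w ∈ G.neighborSet s[i] := heq ▸ hjw
  exact hw s[i] (List.mem_iff_getElem.2 ⟨i, by simp; omega, List.getElem_take⟩) hiw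

lemma LegalSeq.eq_of_neighborSet_eq {G : SimpleGraph V} {s : List V} (hs : LegalSeq G s)
    {x y : V} (hx : x ∈ s) (hy : y ∈ s) (h : G.neighborSet x = G.neighborSet y) : x = y := by
  obtain ⟨i, hi, rfl⟩ := List.mem_iff_getElem.1 hx
  obtain ⟨j, hj, rfl⟩ := List.mem_iff_getElem.1 hy
  rcases lt_trichotomy i j with hij | rfl | hji
  · exact absurd h (hs.neighborSet_ne_of_lt hij hj)
  · rfl
  · exact absurd h.symm (hs.neighborSet_ne_of_lt hji hi)

lemma LegalSeq.map {H : SimpleGraph W} {f : V → W} {s : List V}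
    (hf : Set.InjOn f {x | x ∈ s}) (hs : LegalSeq (H.comap f) s) : LegalSeq H (s.map f) := by
  refine ⟨hs.1.map_on fun x hx y hy => hf hx hy, fun i hi hpos => ?_⟩
  obtain ⟨w, hiw, hw⟩ := hs.2 i (by simpa using hi) hpos
  refine ⟨f w, by simpa using hiw, fun z hz => ?_⟩
  rw [← List.map_take] at hz
  obtain ⟨x, hx, rfl⟩ := List.mem_map.1 hz
  exact hw x hx

lemma LegalSeq.injOn_of_comap {H : SimpleGraph W} {φ : V → W} {s : List V}
    (hs : LegalSeq (H.comap φ) s) : Set.InjOn φ {x | x ∈ s} := fun x hx y hy hxy =>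
  hs.eq_of_neighborSet_eq hx hy (by ext z; simp [hxy])

lemma List.setOf_mem_map (f : V → W) (s : List V) : {w | w ∈ s.map f} = f '' {x | x ∈ s} := by
  ext; simp

theorem grundyTotalDomNum_comap_of_surjective {φ : V → W} (hφ : Surjective φ)
    (H : SimpleGraph W) : grundyTotalDomNum (H.comap φ) = grundyTotalDomNum H := by
  obtain ⟨σ, hσ⟩ := hφ.hasRightInverse
  have hσφ : (H.comap φ).comap σ = H := by rw [comap_comap, hσ.comp_eq_id, comap_id]
  unfold grundyTotalDomNum
  congr 1
  ext n
  constructor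
  · rintro ⟨s, ⟨hleg, hdom⟩, rfl⟩
    refine ⟨s.map φ, ⟨hleg.map hleg.injOn_of_comap, ?_⟩, List.length_map φ⟩
    rw [List.setOf_mem_map]
    exact hdom.image_of_comap hφ
  · rintro ⟨t, ⟨hleg, hdom⟩, rfl⟩
    refine ⟨t.map σ, ⟨LegalSeq.map hσ.injective.injOn (by rwa [hσφ]), ?_⟩, List.length_map σ⟩
    rw [List.setOf_mem_map]
    exact hdom.comap_image hσ

variable {u v : V}

open Classical in
noncomputable def twinRetraction (huv : u ≠ v) (x : V) : {w | w ≠ u} :=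
  if hx : x = u then ⟨v, huv.symm⟩ else ⟨x, hx⟩

lemma twinRetraction_surjective (huv : u ≠ v) : Surjective (twinRetraction huv) := by
  rintro ⟨x, hx⟩
  exact ⟨x, dif_neg hx⟩

lemma comap_induce_twinRetraction {G : SimpleGraph V} (huv : u ≠ v)
    (htwin : G.neighborSet u = G.neighborSet v) :
    (G.induce {w | w ≠ u}).comap (twinRetraction huv) = G := by
  have hu : ∀ x, G.Adj u x ↔ G.Adj v x := fun x => Set.ext_iff.1 htwin x
  ext x y
  by_cases hx : x = u <;> by_cases hy : y = u <;>
    simp [twinRetraction, hx, hy, hu, G.adj_comm _ u, G.adj_comm _ v]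

end

/-- If `u` and `v` are false twins in a graph `G` with no isolated vertices, then `G - u`
has no isolated vertices and has the same total domination number and the same Grundy total
domination number as `G`. -/
theorem stmt_4 {V : Type*} [Finite V] (G : SimpleGraph V) (hiso : NoIsolatedVerts G)
    (u v : V) (huv : u ≠ v) (htwin : G.neighborSet u = G.neighborSet v) :
    NoIsolatedVerts (G.induce {w | w ≠ u}) ∧
    totalDomNum (G.induce {w | w ≠ u}) = totalDomNum G ∧
    grundyTotalDomNum (G.induce {w | w ≠ u}) = grundyTotalDomNum G := by
  have hr := twinRetraction_surjective huv
  have hG := comap_induce_twinRetraction huv htwin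
  refine ⟨(hG ▸ hiso).of_comap hr, ?_, ?_⟩
  · rw [← totalDomNum_comap_of_surjective hr, hG]
  · rw [← grundyTotalDomNum_comap_of_surjective hr, hG]
end

section
/- Let k ≥ 4 be an even integer and let G be a total k-uniform, false twin-free graph with no isolated vertices. Then for every edge uv of G, the subgraph of G induced by V(G) \ (N[u] ∪ N[v]) is false twin-free. -/
open SimpleGraph

/-!
In a total `k`-uniform graph without isolated vertices, the first vertex `y` of any legal
sequence `y :: s` has a neighbor that no vertex of `s` dominates: extend the sequence to a
maximal, hence total dominating, one of length at most `k`; dropping `y` leaves fewer than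
`k = γ_t` vertices, which cannot dominate everything, and whatever they miss is dominated by `y` alone.

Now let `x, y ∉ N[u] ∪ N[v]` be twins in the induced subgraph but not in `G`, say `x ~ w ≁ y`.
Then `(y, x, u, v)` is legal, so `y` has a neighbor `p` adjacent to none of `x, u, v`. As `y` is
adjacent to neither `u` nor `v`, `p ∉ N[u] ∪ N[v]`, so `p` separates `x` and `y` inside the
induced subgraph, a contradiction.
-/

section

variable {V : Type*} {G : SimpleGraph V}

namespace LegalSeq

theorem nil (G : SimpleGraph V) : LegalSeq G [] :=
  ⟨List.nodup_nil, fun _ h => by simp at h⟩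

theorem append_singleton_s5 {s : List V} {t : V} (hs : LegalSeq G s) (ht : t ∉ s)
    (hw : s ≠ [] → ∃ w, G.Adj t w ∧ ∀ z ∈ s, ¬ G.Adj z w) : LegalSeq G (s ++ [t]) := by
  obtain ⟨hnd, hleg⟩ := hs
  refine ⟨List.concat_eq_append ▸ hnd.concat ht, fun i h hi => ?_⟩
  rcases Nat.lt_or_ge i s.length with hlt | hge
  · obtain ⟨w, hw1, hw2⟩ := hleg i hlt hi
    refine ⟨w, by simpa [List.getElem_append_left hlt] using hw1, fun z hz => hw2 z ?_⟩
    rwa [List.take_append_of_le_length hlt.le] at hz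
  · have hi : i = s.length := by simp at h; omega
    subst hi
    obtain ⟨w, hw1, hw2⟩ := hw (List.ne_nil_of_length_pos hi)
    exact ⟨w, by simpa using hw1, fun z hz => hw2 z (by rwa [List.take_left] at hz)⟩

theorem length_le_card [Finite V] {s : List V} (hs : LegalSeq G s) : s.length ≤ Nat.card V := by
  have := Fintype.ofFinite V
  simpa only [Nat.card_eq_fintype_card] using hs.1.length_le_card

theorem exists_maximal_extension [Finite V] {s : List V} (hs : LegalSeq G s) :
    ∃ r, LegalSeq G (s ++ r) ∧ ∀ t, ¬ LegalSeq G (s ++ r ++ [t]) := by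
  obtain ⟨n, hn⟩ : ∃ n, Nat.card V ≤ s.length + n := ⟨Nat.card V, by omega⟩
  induction n generalizing s with
  | zero =>
    refine ⟨[], by simpa using hs, fun t ht => ?_⟩
    have := ht.length_le_card
    simp at this
    omega
  | succ n ih =>
    by_cases hext : ∃ t, LegalSeq G (s ++ [t])
    · obtain ⟨t, ht⟩ := hext
      obtain ⟨r, hr, hmax⟩ := ih ht (by simp; omega)
      exact ⟨t :: r, by simpa using hr, by simpa using hmax⟩
    · exact ⟨[], by simpa using hs, by simpa using hext⟩

end LegalSeq

theorem TotalDomSet.of_maximal_legalSeq (hiso : NoIsolatedVerts G) {s : List V}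
    (hs : LegalSeq G s) (hmax : ∀ t, ¬ LegalSeq G (s ++ [t])) : TotalDomSet G {v | v ∈ s} := by
  intro p
  by_contra hp
  obtain ⟨q, hpq⟩ := hiso p
  have hq : q ∉ s := fun hq => hp ⟨q, hq, hpq⟩
  exact hmax q (hs.append_singleton_s5 hq fun _ => ⟨p, hpq.symm, fun z hz hzp => hp ⟨z, hz, hzp.symm⟩⟩)

namespace TotalKUniform

variable {k : ℕ}

theorem le_ncard (huni : TotalKUniform G k) {A : Set V} (hA : TotalDomSet G A) : k ≤ A.ncard :=
  huni.1 ▸ Nat.sInf_le ⟨A, hA, rfl⟩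

theorem length_le [Finite V] (huni : TotalKUniform G k) {s : List V} (hs : TotalDomSeq G s) :
    s.length ≤ k :=
  huni.2 ▸ le_csSup ⟨Nat.card V, by rintro n ⟨s', hs', rfl⟩; exact hs'.1.length_le_card⟩
    ⟨s, hs, rfl⟩

theorem exists_private_neighbor_of_totalDomSeq [Finite V] (huni : TotalKUniform G k) {y : V}
    {s : List V} (hs : TotalDomSeq G (y :: s)) : ∃ w, G.Adj y w ∧ ∀ z ∈ s, ¬ G.Adj z w := by
  classical
  have hnot : ¬ TotalDomSet G {z | z ∈ s} := fun hdom => by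
    have hk := huni.le_ncard hdom
    have hlen := huni.length_le hs
    have hcard : {z | z ∈ s}.ncard ≤ s.length := by
      simpa [← Set.ncard_coe_finset] using s.toFinset_card_le
    simp only [List.length_cons] at hlen
    omega
  obtain ⟨w, hw⟩ := not_forall.1 hnot
  obtain ⟨a, ha, haw⟩ := hs.2 w
  rcases List.mem_cons.1 ha with rfl | ha
  · exact ⟨w, haw.symm, fun z hz hzw => hw ⟨z, hz, hzw.symm⟩⟩
  · exact absurd ⟨a, ha, haw⟩ hw

theorem exists_private_neighbor_of_legalSeq [Finite V] (huni : TotalKUniform G k)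
    (hiso : NoIsolatedVerts G) {y : V} {s : List V} (hs : LegalSeq G (y :: s)) :
    ∃ w, G.Adj y w ∧ ∀ z ∈ s, ¬ G.Adj z w := by
  obtain ⟨r, hr, hmax⟩ := hs.exists_maximal_extension
  obtain ⟨w, hyw, hw⟩ := huni.exists_private_neighbor_of_totalDomSeq (s := s ++ r)
    ⟨hr, .of_maximal_legalSeq hiso hr hmax⟩
  exact ⟨w, hyw, fun z hz => hw z (List.mem_append_left r hz)⟩

theorem exists_adj_not_adj_outside_closedNbhd [Finite V] (huni : TotalKUniform G k)
    (hiso : NoIsolatedVerts G) {u v x y w : V} (hadj : G.Adj u v)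
    (hx : x ∈ (closedNbhd G u ∪ closedNbhd G v)ᶜ) (hy : y ∈ (closedNbhd G u ∪ closedNbhd G v)ᶜ)
    (hxy : x ≠ y) (hxw : G.Adj x w) (hyw : ¬ G.Adj y w) :
    ∃ p ∈ (closedNbhd G u ∪ closedNbhd G v)ᶜ, G.Adj y p ∧ ¬ G.Adj x p := by
  simp only [closedNbhd, Set.mem_compl_iff, Set.mem_union, Set.mem_insert_iff,
    mem_neighborSet, not_or] at hx hy ⊢
  obtain ⟨⟨hxu, hux⟩, hxv, hvx⟩ := hx
  obtain ⟨⟨hyu, huy⟩, hyv, hvy⟩ := hy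
  have hlegal : LegalSeq G [y, x, u, v] := by
    have h1 := (LegalSeq.nil G).append_singleton_s5 (t := y) (by simp) (by simp)
    have h2 := h1.append_singleton_s5 (t := x) (by simpa using hxy)
      fun _ => ⟨w, hxw, by simpa using hyw⟩
    have h3 := h2.append_singleton_s5 (t := u) (by simp [Ne.symm hyu, Ne.symm hxu])
      fun _ => ⟨v, hadj, by simpa [G.adj_comm _ v] using ⟨hvy, hvx⟩⟩
    simpa using h3.append_singleton_s5 (t := v) (by simp [Ne.symm hyv, Ne.symm hxv, hadj.ne'])
      fun _ => ⟨u, hadj.symm, by simpa [G.adj_comm _ u] using ⟨huy, hux⟩⟩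
  obtain ⟨p, hyp, hp⟩ := huni.exists_private_neighbor_of_legalSeq hiso hlegal
  simp only [List.mem_cons, List.not_mem_nil, or_false, forall_eq_or_imp, forall_eq] at hp
  obtain ⟨hxp, hup, hvp⟩ := hp
  refine ⟨p, ⟨⟨?_, hup⟩, ?_, hvp⟩, hyp, hxp⟩
  · rintro rfl; exact huy hyp.symm
  · rintro rfl; exact hvy hyp.symm

end TotalKUniform

end

theorem stmt_5_general {V : Type*} [Finite V] (G : SimpleGraph V) (k : ℕ)
    (hiso : NoIsolatedVerts G) (hftf : FalseTwinFree G)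
    (huni : TotalKUniform G k) (u v : V) (hadj : G.Adj u v) :
    FalseTwinFree (G.induce ((closedNbhd G u ∪ closedNbhd G v)ᶜ)) := by
  intro a b hab hEq
  have htwin : ∀ p (hp : p ∈ (closedNbhd G u ∪ closedNbhd G v)ᶜ), G.Adj a p ↔ G.Adj b p :=
    fun p hp => by simpa using Set.ext_iff.1 hEq ⟨p, hp⟩
  have hne : (a : V) ≠ b := Subtype.coe_ne_coe.2 hab
  obtain ⟨w, hw⟩ := not_forall.1 (mt Set.ext (hftf a b hne))
  simp only [mem_neighborSet] at hw
  by_cases haw : G.Adj a w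
  · obtain ⟨p, hp, hbp, hap⟩ := huni.exists_adj_not_adj_outside_closedNbhd hiso hadj a.2 b.2
      hne haw (by tauto)
    exact hap ((htwin p hp).2 hbp)
  · obtain ⟨p, hp, hap, hbp⟩ := huni.exists_adj_not_adj_outside_closedNbhd hiso hadj b.2 a.2
      hne.symm (by tauto) haw
    exact hbp ((htwin p hp).1 hap)

/-- Let `k ≥ 4` be even and `G` a total `k`-uniform, false twin-free graph with no isolated
vertices. Then for every edge `uv` of `G`, the subgraph induced by `V(G) \ (N[u] ∪ N[v])` is
false twin-free. -/
theorem stmt_5 {V : Type*} [Finite V] (G : SimpleGraph V) (k : ℕ) (hk4 : 4 ≤ k)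
    (hke : Even k) (hiso : NoIsolatedVerts G) (hftf : FalseTwinFree G)
    (huni : TotalKUniform G k) (u v : V) (hadj : G.Adj u v) :
    FalseTwinFree (G.induce ((closedNbhd G u ∪ closedNbhd G v)ᶜ)) :=
  stmt_5_general G k hiso hftf huni u v hadj
end

section
/- The line graph L(K₆) of the complete graph on 6 vertices is total 4-uniform, i.e., γ_t(L(K₆)) = γ_gr^t(L(K₆)) = 4. (Moreover L(K₆) is connected, false twin-free and contains a triangle, so it is a connected non-bipartite total 4-uniform graph.) -/
open SimpleGraph

/-- The line graph `L(Kₙ)` of the complete graph `Kₙ`: vertices are the 2-element subsets of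
`{1, …, n}`, two of them being adjacent iff they are distinct and intersect. -/
def lineK (n : ℕ) : SimpleGraph {s : Finset (Fin n) // s.card = 2} where
  Adj a b := a ≠ b ∧ (a.1 ∩ b.1).Nonempty
  symm := ⟨fun a b h => ⟨h.1.symm, by rw [Finset.inter_comm]; exact h.2⟩⟩
  loopless := ⟨fun a h => h.1 rfl⟩

/-!
The vertices of `L(K₆)` are the fifteen edges of `K₆`, two of them adjacent iff they are distinct
and share an endpoint. A finite check shows that no three vertices totally dominate `L(K₆)`, while
`01, 02, 34, 35` is a total dominating sequence; this gives `γ_t = 4` and `γ_gr^t ≥ 4`.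

For `γ_gr^t ≤ 4`: in a legal sequence, the entries after position `m` have private neighbours which
are pairwise distinct (a later one is adjacent to no earlier entry) and not dominated by the first
`m` entries. So the length is at most `m` plus the number of vertices the first `m` entries leave
undominated, and in `L(K₆)` a legal sequence of length three leaves at most one (a finite check).
-/

section TotalDomination

variable {V : Type*} {G : SimpleGraph V}

theorem TotalDomSet.mono {A B : Set V} (hA : TotalDomSet G A) (hAB : A ⊆ B) :
    TotalDomSet G B := fun v => (hA v).imp fun _ ha => ⟨hAB ha.1, ha.2⟩

theorem TotalDomSet.lt_ncard [Finite V] {A : Set V} {k : ℕ} (hk : k ≤ Nat.card V)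
    (hno : ∀ B : Set V, B.ncard = k → ¬ TotalDomSet G B) (hA : TotalDomSet G A) :
    k < A.ncard := by
  by_contra! hAk
  obtain ⟨B, hAB, -, hBk⟩ := Set.exists_superset_subset_encard_eq (Set.subset_univ A)
    (k := k) (by rw [← A.toFinite.cast_ncard_eq]; exact_mod_cast hAk)
    (by rw [← Set.toFinite _ |>.cast_ncard_eq, Set.ncard_univ]; exact_mod_cast hk)
  exact hno B (by rw [Set.ncard_def, hBk]; rfl) (hA.mono hAB)

theorem totalDomNum_eq_of {k : ℕ} (hex : ∃ A : Set V, TotalDomSet G A ∧ A.ncard = k)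
    (hle : ∀ A : Set V, TotalDomSet G A → k ≤ A.ncard) : totalDomNum G = k :=
  le_antisymm (Nat.sInf_le hex) (le_csInf ⟨k, hex⟩ fun _ ⟨A, hA, hn⟩ => hn ▸ hle A hA)

theorem grundyTotalDomNum_eq_of {k : ℕ} (hex : ∃ s : List V, TotalDomSeq G s ∧ s.length = k)
    (hle : ∀ s : List V, TotalDomSeq G s → s.length ≤ k) : grundyTotalDomNum G = k := by
  have hbdd : ∀ n ∈ {n | ∃ s : List V, TotalDomSeq G s ∧ s.length = n}, n ≤ k :=
    fun _ ⟨s, hs, hn⟩ => hn ▸ hle s hs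
  exact le_antisymm (csSup_le ⟨k, hex⟩ hbdd) (le_csSup ⟨k, hbdd⟩ hex)

section Undominated

variable [Fintype V] [DecidableRel G.Adj]

def notDominatedBy (G : SimpleGraph V) [DecidableRel G.Adj] (t : List V) : Finset V :=
  Finset.univ.filter fun v => ∀ u ∈ t, ¬ G.Adj u v

theorem LegalSeq.length_le_add_card_notDominatedBy {s : List V} (hs : LegalSeq G s) {m : ℕ}
    (hm : 0 < m) (hms : m ≤ s.length) :
    s.length ≤ m + (notDominatedBy G (s.take m)).card := by
  have : Nonempty V := ⟨s.get ⟨0, by omega⟩⟩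
  choose! w hwAdj hwPriv using hs.2
  have hget_mem_take {i j : ℕ} (hij : i < j) (hj : j < s.length) :
      s.get ⟨i, by omega⟩ ∈ s.take j := by
    have hmem := List.getElem_mem (l := s.take j) (n := i) (by simp; omega)
    rwa [List.getElem_take] at hmem
  have hcard := Finset.card_le_card_of_injOn (s := Finset.Ico m s.length)
    (t := notDominatedBy G (s.take m)) w ?maps ?inj
  · simp only [Nat.card_Ico] at hcard
    omega
  case maps =>
    intro j hj
    simp only [Finset.coe_Ico, Set.mem_Ico] at hj
    simp only [notDominatedBy, Finset.coe_filter, Finset.mem_univ, true_and, Set.mem_ofPred_eq]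
    exact fun u hu => hwPriv j hj.2 (by omega) u (List.take_subset_take_left s hj.1 hu)
  case inj =>
    intro i hi j hj hij
    simp only [Finset.coe_Ico, Set.mem_Ico] at hi hj
    by_contra hne
    rcases Nat.lt_or_gt_of_ne hne with h | h
    · exact hwPriv j hj.2 (by omega) _ (hget_mem_take h hj.2) (hij ▸ hwAdj i hi.2 (by omega))
    · exact hwPriv i hi.2 (by omega) _ (hget_mem_take h hi.2) (hij ▸ hwAdj j hj.2 (by omega))

end Undominated

theorem falseTwinFree_of_exists_adj_not_adj
    (h : ∀ u v : V, u ≠ v → ∃ w, G.Adj u w ∧ ¬ G.Adj v w) : FalseTwinFree G := by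
  intro u v huv heq
  obtain ⟨w, huw, hvw⟩ := h u v huv
  exact hvw (show w ∈ G.neighborSet v from heq ▸ huw)

theorem SimpleGraph.preconnected_of_exists_common_adj
    (h : ∀ u v : V, u ≠ v → ¬ G.Adj u v → ∃ w, G.Adj u w ∧ G.Adj w v) : G.Preconnected := by
  intro u v
  by_cases huv : u = v
  · exact huv ▸ Reachable.refl u
  by_cases hadj : G.Adj u v
  · exact hadj.reachable
  obtain ⟨w, huw, hwv⟩ := h u v huv hadj
  exact huw.reachable.trans hwv.reachable

end TotalDomination

instance (n : ℕ) : DecidableRel (lineK n).Adj := fun a b =>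
  inferInstanceAs (Decidable (a ≠ b ∧ (a.1 ∩ b.1).Nonempty))

namespace LineK6

abbrev Vertex : Type := {s : Finset (Fin 6) // s.card = 2}

def edge (a b : Fin 6) (h : a ≠ b := by decide) : Vertex := ⟨{a, b}, Finset.card_pair h⟩

theorem exists_not_adj_three : ∀ a b c : Vertex,
    ∃ v, ¬ (lineK 6).Adj v a ∧ ¬ (lineK 6).Adj v b ∧ ¬ (lineK 6).Adj v c := by
  decide

theorem card_notDominatedBy_le_one : ∀ a b c : Vertex, a ≠ b →
    (∃ w, (lineK 6).Adj c w ∧ ¬ (lineK 6).Adj a w ∧ ¬ (lineK 6).Adj b w) →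
    (notDominatedBy (lineK 6) [a, b, c]).card ≤ 1 := by
  decide

theorem not_totalDomSet_of_ncard_eq_three {A : Set Vertex} (hA : A.ncard = 3) :
    ¬ TotalDomSet (lineK 6) A := by
  obtain ⟨a, b, c, -, -, -, rfl⟩ := Set.ncard_eq_three.mp hA
  intro hdom
  obtain ⟨v, hva, hvb, hvc⟩ := exists_not_adj_three a b c
  obtain ⟨x, hx, hvx⟩ := hdom v
  rcases hx with rfl | rfl | rfl
  exacts [hva hvx, hvb hvx, hvc hvx]

theorem length_le_four_of_legalSeq {s : List Vertex} (hs : LegalSeq (lineK 6) s) :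
    s.length ≤ 4 := by
  match s, hs with
  | [], _ | [_], _ | [_, _], _ => simp
  | a :: b :: c :: t, hs =>
    have hab : a ≠ b := fun h => (List.nodup_cons.mp hs.1).1 (by simp [h])
    obtain ⟨w, hcw, hw⟩ := hs.2 2 (by simp) (by omega)
    have hcard := card_notDominatedBy_le_one a b c hab
      ⟨w, hcw, hw a (by simp), hw b (by simp)⟩
    have := LegalSeq.length_le_add_card_notDominatedBy hs (m := 3) (by omega) (by simp)
    simp only [List.take_succ_cons, List.take_zero] at this
    omega

def grundySeq : List Vertex := [edge 0 1, edge 0 2, edge 3 4, edge 3 5]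

theorem totalDomSeq_grundySeq : TotalDomSeq (lineK 6) grundySeq := by
  refine ⟨by unfold LegalSeq; decide, fun v => ?_⟩
  simpa using (by decide : ∀ v : Vertex, ∃ a ∈ grundySeq, (lineK 6).Adj v a) v

theorem totalDomNum_eq_four : totalDomNum (lineK 6) = 4 := by
  refine totalDomNum_eq_of ⟨_, totalDomSeq_grundySeq.2, ?_⟩ fun A hA => ?_
  · rw [show {v | v ∈ grundySeq} = ↑grundySeq.toFinset by ext; simp, Set.ncard_coe_finset]
    decide
  · exact hA.lt_ncard (by simp; decide) fun B => not_totalDomSet_of_ncard_eq_three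

theorem grundyTotalDomNum_eq_four : grundyTotalDomNum (lineK 6) = 4 :=
  grundyTotalDomNum_eq_of ⟨_, totalDomSeq_grundySeq, rfl⟩
    fun _ hs => length_le_four_of_legalSeq hs.1

theorem connected : (lineK 6).Connected :=
  (connected_iff _).mpr ⟨preconnected_of_exists_common_adj (by decide), ⟨edge 0 1⟩⟩

theorem falseTwinFree : FalseTwinFree (lineK 6) :=
  falseTwinFree_of_exists_adj_not_adj (by decide)

end LineK6

open LineK6 in
/-- The line graph `L(K₆)` is total 4-uniform; moreover it is connected, false twin-free and
contains a triangle (hence is non-bipartite). -/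
theorem stmt_7 :
    TotalKUniform (lineK 6) 4 ∧ (lineK 6).Connected ∧ FalseTwinFree (lineK 6) ∧
    ∃ a b c, (lineK 6).Adj a b ∧ (lineK 6).Adj b c ∧ (lineK 6).Adj a c :=
  ⟨⟨totalDomNum_eq_four, grundyTotalDomNum_eq_four⟩, connected, falseTwinFree,
    edge 0 1, edge 0 2, edge 1 2, by decide, by decide, by decide⟩
end

section
/- For every n ≥ 3, the crown graph on 2n vertices (the complete bipartite graph K_{n,n} with a perfect matching removed) is a connected total 4-uniform graph, i.e., its total domination number and Grundy total domination number both equal 4. -/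
/-!
When a vertex `xᵣ` is appended to a legal sequence of the crown graph, its new private neighbour
`yₘ` must be adjacent to no earlier vertex; the only `x`-vertex not adjacent to `yₘ` is `xₘ`, so
at most one `x`-vertex precedes `xᵣ`. Hence a legal sequence contains at most two vertices of each
side and `γ_gr^t ≤ 4`. Conversely, if `xₚ` dominates some `yᵢ` then the vertex dominating `yₚ` is
a second `x`-vertex, so every total dominating set has two vertices on each side, and
`(x₀, x₁, y₀, y₁)` is a total dominating sequence of length `4`.
-/

open SimpleGraph

/-- The crown graph on `2n` vertices: `K_{n,n}` minus a perfect matching, with parts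
`{x₁,…,xₙ}` and `{y₁,…,yₙ}` and `xᵢ` adjacent to `yⱼ` iff `i ≠ j`. -/
def crownGraph (n : ℕ) : SimpleGraph (Fin n ⊕ Fin n) where
  Adj a b := ∃ i j : Fin n, i ≠ j ∧
    ((a = Sum.inl i ∧ b = Sum.inr j) ∨ (a = Sum.inr i ∧ b = Sum.inl j))
  symm := by
    constructor
    rintro a b ⟨i, j, hij, h | h⟩
    · exact ⟨j, i, hij.symm, Or.inr ⟨h.2, h.1⟩⟩
    · exact ⟨j, i, hij.symm, Or.inl ⟨h.2, h.1⟩⟩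
  loopless := by
    constructor
    rintro a ⟨i, j, hij, ⟨h1, h2⟩ | ⟨h1, h2⟩⟩ <;> simp_all

variable {V : Type*} {G : SimpleGraph V}

theorem legalSeq_append_singleton_iff {l : List V} {v : V} :
    LegalSeq G (l ++ [v]) ↔ LegalSeq G l ∧ v ∉ l ∧
      (l ≠ [] → ∃ w, G.Adj v w ∧ ∀ u ∈ l, ¬ G.Adj u w) := by
  have hnd : (l ++ [v]).Nodup ↔ v ∉ l ∧ l.Nodup := by
    rw [← List.concat_eq_append, List.nodup_concat]
  have hprefix : ∀ i (hi : i < l.length),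
      (l ++ [v])[i]'(by simp; omega) = l[i] ∧ (l ++ [v]).take i = l.take i :=
    fun i hi => ⟨List.getElem_append_left hi, List.take_append_of_le_length hi.le⟩
  unfold LegalSeq
  constructor
  · rintro ⟨hnd', hpriv⟩
    obtain ⟨hv, hl⟩ := hnd.1 hnd'
    refine ⟨⟨hl, fun i hi hi0 => ?_⟩, hv, fun hne => ?_⟩
    · obtain ⟨w, hw, hall⟩ := hpriv i (by simp; omega) hi0
      simp only [List.get_eq_getElem, hprefix i hi] at hw hall
      exact ⟨w, hw, hall⟩
    · obtain ⟨w, hw, hall⟩ := hpriv l.length (by simp) (List.length_pos_iff.2 hne)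
      exact ⟨w, by simpa using hw, by simpa using hall⟩
  · rintro ⟨⟨hl, hpriv⟩, hv, hlast⟩
    refine ⟨hnd.2 ⟨hv, hl⟩, fun i hi hi0 => ?_⟩
    rcases Nat.lt_succ_iff_lt_or_eq.1 (by simpa using hi) with hi | rfl
    · simp only [List.get_eq_getElem, hprefix i hi]
      exact hpriv i hi hi0
    · obtain ⟨w, hw, hall⟩ := hlast (List.length_pos_iff.1 hi0)
      exact ⟨w, by simpa using hw, by simpa using hall⟩

theorem LegalSeq.countP_le_two {p : V → Bool}
    (hp : ∀ v w, p v → G.Adj v w → ∃ z, ∀ u, p u → ¬ G.Adj u w → u = z) {s : List V}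
    (hs : LegalSeq G s) : s.countP p ≤ 2 := by
  classical
  induction s using List.reverseRecOn with
  | nil => simp
  | append_singleton l v ih =>
    obtain ⟨hl, -, hlast⟩ := legalSeq_append_singleton_iff.1 hs
    rw [List.countP_append]
    cases hv : p v
    · simpa [hv] using ih hl
    rcases eq_or_ne l [] with rfl | hne
    · simp [hv]
    obtain ⟨w, hvw, hpriv⟩ := hlast hne
    obtain ⟨z, hz⟩ := hp v w hv hvw
    have hcount : l.countP p ≤ l.count z := by
      rw [List.count_eq_countP]
      exact List.countP_mono_left fun u hu hpu => by simp [hz u hpu (hpriv u hu)]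
    have := List.nodup_iff_count_le_one.1 hl.1 z
    simp only [List.countP_singleton, hv, if_true]
    omega

theorem List.Nodup.ncard_setOf_mem {α : Type*} {l : List α} (hl : l.Nodup) :
    {x | x ∈ l}.ncard = l.length := by
  classical
  rw [← List.coe_toFinset, Set.ncard_coe_finset, List.toFinset_card_of_nodup hl]

theorem totalDomNum_eq_of_forall_le {k : ℕ} {A : Set V} (hA : TotalDomSet G A)
    (hAk : A.ncard = k) (hle : ∀ B, TotalDomSet G B → k ≤ B.ncard) : totalDomNum G = k :=
  le_antisymm (Nat.sInf_le ⟨A, hA, hAk⟩) (le_csInf ⟨k, A, hA, hAk⟩ fun _ ⟨B, hB, hBm⟩ =>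
    hBm ▸ hle B hB)

theorem grundyTotalDomNum_eq_of_forall_le {k : ℕ} {s : List V} (hs : TotalDomSeq G s)
    (hsk : s.length = k) (hle : ∀ t, TotalDomSeq G t → t.length ≤ k) :
    grundyTotalDomNum G = k := by
  have hmem : k ∈ {m | ∃ t : List V, TotalDomSeq G t ∧ t.length = m} := ⟨s, hs, hsk⟩
  have hbdd : ∀ m ∈ {m | ∃ t : List V, TotalDomSeq G t ∧ t.length = m}, m ≤ k :=
    fun _ ⟨t, ht, htm⟩ => htm ▸ hle t ht
  exact le_antisymm (csSup_le ⟨k, hmem⟩ hbdd) (le_csSup ⟨k, hbdd⟩ hmem)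

namespace crownGraph

variable {n : ℕ}

@[simp]
theorem adj_inl_inr {i j : Fin n} : (crownGraph n).Adj (.inl i) (.inr j) ↔ i ≠ j := by
  simp [crownGraph]

@[simp]
theorem adj_inr_inl {i j : Fin n} : (crownGraph n).Adj (.inr i) (.inl j) ↔ i ≠ j := by
  simp [crownGraph]

@[simp]
theorem not_adj_inl_inl {i j : Fin n} : ¬ (crownGraph n).Adj (.inl i) (.inl j) := by
  simp [crownGraph]

@[simp]
theorem not_adj_inr_inr {i j : Fin n} : ¬ (crownGraph n).Adj (.inr i) (.inr j) := by
  simp [crownGraph]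

theorem connected (hn : 3 ≤ n) : (crownGraph n).Connected := by
  have i₀ : Fin n := ⟨0, by omega⟩
  have reach_inl (i : Fin n) : (crownGraph n).Reachable (.inl i₀) (.inl i) := by
    obtain ⟨k, hk₀, hki⟩ := Fin.exists_ne_and_ne_of_two_lt i₀ i (by omega)
    exact (adj_inl_inr.2 hk₀.symm).reachable.trans (adj_inr_inl.2 hki).reachable
  refine (connected_iff_exists_forall_reachable _).2 ⟨.inl i₀, ?_⟩
  rintro (i | j)
  · exact reach_inl i
  · obtain ⟨k, hkj, -⟩ := Fin.exists_ne_and_ne_of_two_lt j j (by omega)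
    exact (reach_inl k).trans (adj_inl_inr.2 hkj).reachable

theorem legalSeq_length_le_four {s : List (Fin n ⊕ Fin n)} (hs : LegalSeq (crownGraph n) s) :
    s.length ≤ 4 := by
  have hleft : s.countP Sum.isLeft ≤ 2 := hs.countP_le_two <| by
    rintro (r | r) (m | m) hv hvw
    · exact absurd hvw not_adj_inl_inl
    · exact ⟨.inl m, by rintro (u | u) <;> simp⟩
    all_goals simp at hv
  have hright : s.countP Sum.isRight ≤ 2 := hs.countP_le_two <| by
    rintro (r | r) (m | m) hv hvw
    · simp at hv
    · simp at hv
    · exact ⟨.inr m, by rintro (u | u) <;> simp⟩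
    · exact absurd hvw not_adj_inr_inr
  have hsplit := List.length_eq_countP_add_countP Sum.isLeft (l := s)
  have hnotLeft : s.countP (fun v => ¬ v.isLeft) = s.countP Sum.isRight :=
    List.countP_congr fun v _ => by cases v <;> simp
  omega

theorem exists_inl_ne_mem_of_totalDomSet {A : Set (Fin n ⊕ Fin n)}
    (hA : TotalDomSet (crownGraph n) A) (i : Fin n) : ∃ p q, p ≠ q ∧ .inl p ∈ A ∧ .inl q ∈ A := by
  obtain ⟨p | p, hp, hip⟩ := hA (.inr i)
  swap; · exact absurd hip not_adj_inr_inr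
  obtain ⟨q | q, hq, hpq⟩ := hA (.inr p)
  swap; · exact absurd hpq not_adj_inr_inr
  exact ⟨p, q, adj_inr_inl.1 hpq, hp, hq⟩

theorem exists_inr_ne_mem_of_totalDomSet {A : Set (Fin n ⊕ Fin n)}
    (hA : TotalDomSet (crownGraph n) A) (i : Fin n) : ∃ p q, p ≠ q ∧ .inr p ∈ A ∧ .inr q ∈ A := by
  obtain ⟨p | p, hp, hip⟩ := hA (.inl i)
  · exact absurd hip not_adj_inl_inl
  obtain ⟨q | q, hq, hpq⟩ := hA (.inl p)
  · exact absurd hpq not_adj_inl_inl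
  exact ⟨p, q, adj_inl_inr.1 hpq, hp, hq⟩

theorem four_le_ncard_of_totalDomSet {A : Set (Fin n ⊕ Fin n)}
    (hA : TotalDomSet (crownGraph n) A) (hn : 0 < n) : 4 ≤ A.ncard := by
  obtain ⟨p, q, hpq, hp, hq⟩ := exists_inl_ne_mem_of_totalDomSet hA ⟨0, hn⟩
  obtain ⟨u, w, huw, hu, hw⟩ := exists_inr_ne_mem_of_totalDomSet hA ⟨0, hn⟩
  have hnd : [Sum.inl p, .inl q, .inr u, .inr w].Nodup := by simp [hpq, huw]
  calc 4 = {x | x ∈ [Sum.inl p, .inl q, .inr u, .inr w]}.ncard := hnd.ncard_setOf_mem.symm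
    _ ≤ A.ncard := Set.ncard_le_ncard (by simp [Set.subset_def, *]) A.toFinite

theorem totalDomSeq_quad {i j : Fin n} (hij : i ≠ j) :
    TotalDomSeq (crownGraph n) [.inl i, .inl j, .inr i, .inr j] := by
  refine ⟨?_, ?_⟩
  · show LegalSeq _ ([] ++ [Sum.inl i] ++ [Sum.inl j] ++ [Sum.inr i] ++ [Sum.inr j])
    simp only [legalSeq_append_singleton_iff]
    refine ⟨⟨⟨⟨⟨List.nodup_nil, by simp⟩, by simp, by simp⟩,
      ?_, fun _ => ⟨.inr i, ?_⟩⟩, ?_, fun _ => ⟨.inl j, ?_⟩⟩, ?_, fun _ => ⟨.inl i, ?_⟩⟩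
    all_goals simp [hij, hij.symm]
  · rintro (k | k)
    · obtain rfl | hki := eq_or_ne k i
      · exact ⟨.inr j, by simp, adj_inl_inr.2 hij⟩
      · exact ⟨.inr i, by simp, adj_inl_inr.2 hki⟩
    · obtain rfl | hki := eq_or_ne k i
      · exact ⟨.inl j, by simp, adj_inr_inl.2 hij⟩
      · exact ⟨.inl i, by simp, adj_inr_inl.2 hki⟩

end crownGraph

/-- For every `n ≥ 3`, the crown graph on `2n` vertices is a connected total 4-uniform
graph. -/
theorem stmt_13 (n : ℕ) (hn : 3 ≤ n) :
    (crownGraph n).Connected ∧ TotalKUniform (crownGraph n) 4 := by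
  have h01 : (⟨0, by omega⟩ : Fin n) ≠ ⟨1, by omega⟩ := by simp [Fin.ext_iff]
  have hseq := crownGraph.totalDomSeq_quad h01
  refine ⟨crownGraph.connected hn, ?_, ?_⟩
  · exact totalDomNum_eq_of_forall_le hseq.2 hseq.1.1.ncard_setOf_mem
      fun A hA => crownGraph.four_le_ncard_of_totalDomSet hA (by omega)
  · exact grundyTotalDomNum_eq_of_forall_le hseq rfl
      fun t ht => crownGraph.legalSeq_length_le_four ht.1
end
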